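/- arXiv:math/0411606 — 2 statements merged into one kernel-verified Lean document; each statement's English description precedes it below -/
import Mathlib

section
/- If r, x, y, z are positive real numbers satisfying r²(x + y + z) = xyz, then the numbers a = y + z, b = x + z, c = x + y satisfy the strict triangle inequalities a < b + c, b < a + c, c < a + b, their sum is a + b + c = 2(x + y + z), and 16·(r(x + y + z))² = (a+b+c)(−a+b+c)(a−b+c)(a+b−c); that is, (a, b, c) forms a triangle with perimeter 2(x+y+z), area r(x+y+z), and inradius r. -/
/-! With `a = y + z`, `b = x + z`, `c = x + y`, the numbers `x, y, z` are the tangent lengths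
from the vertices to the incircle. Heron's product then factors as `16 · xyz · (x + y + z)`, and the
surface equation `r²(x + y + z) = xyz` turns it into `16 (r (x + y + z))²`. -/

theorem heron_product_of_tangent_lengths {R : Type*} [CommRing R] (x y z : R) :
    ((y + z) + (x + z) + (x + y)) * (-(y + z) + (x + z) + (x + y)) *
        ((y + z) - (x + z) + (x + y)) * ((y + z) + (x + z) - (x + y)) =
      16 * (x * y * z) * (x + y + z) := by
  ring

theorem stmt_2_general (r x y z : ℝ) (hx : 0 < x) (hy : 0 < y) (hz : 0 < z)
    (hsurf : r ^ 2 * (x + y + z) = x * y * z) :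
    let a := y + z
    let b := x + z
    let c := x + y
    a < b + c ∧ b < a + c ∧ c < a + b ∧
    a + b + c = 2 * (x + y + z) ∧
    16 * (r * (x + y + z)) ^ 2 =
      (a + b + c) * (-a + b + c) * (a - b + c) * (a + b - c) ∧
    2 * (r * (x + y + z)) / (a + b + c) = r := by
  intro a b c
  have hperimeter : a + b + c = 2 * (x + y + z) := by ring
  have hs : x + y + z ≠ 0 := by positivity
  refine ⟨by linarith, by linarith, by linarith, hperimeter, ?_, ?_⟩
  · rw [heron_product_of_tangent_lengths, ← hsurf]
    ring
  · rw [hperimeter]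
    field_simp

/-- If `r, x, y, z` are positive reals with `r²(x+y+z) = xyz`, then `a = y+z`, `b = x+z`,
`c = x+y` form a triangle with perimeter `2(x+y+z)`, area `r(x+y+z)` (via Heron's formula)
and inradius `r`. -/
theorem stmt_2 (r x y z : ℝ) (hr : 0 < r) (hx : 0 < x) (hy : 0 < y) (hz : 0 < z)
    (hsurf : r ^ 2 * (x + y + z) = x * y * z) :
    let a := y + z
    let b := x + z
    let c := x + y
    a < b + c ∧ b < a + c ∧ c < a + b ∧
    a + b + c = 2 * (x + y + z) ∧
    16 * (r * (x + y + z)) ^ 2 =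
      (a + b + c) * (-a + b + c) * (a - b + c) * (a + b - c) ∧
    2 * (r * (x + y + z)) / (a + b + c) = r :=
  stmt_2_general r x y z hx hy hz hsurf
end

section
/- Let F = RatFunc ℚ with s the generator X, and let W be the Weierstrass curve y² = (x − 4(s−1)²)³ + s²(s+1)²x² over F, i.e. with coefficients a₁ = a₃ = 0, a₂ = s²(s+1)² − 12(s−1)², a₄ = 48(s−1)⁴, a₆ = −64(s−1)⁶. Then the point P with affine coordinates (4(s−1)², 4s(s+1)(s−1)²) satisfies P ≠ 0 and 3 • P = 0; that is, P has additive order 3 in the group of F-points of W. -/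
open WeierstrassCurve

/-- The generator `s = X` of `ℚ(s) = RatFunc ℚ`. -/
noncomputable def s : RatFunc ℚ := RatFunc.X

/-- The Weierstrass curve `y² = (x − 4(s−1)²)³ + s²(s+1)²x²` over `ℚ(s)`, a Weierstrass model
of the generic fiber of the elliptic K3 surface `Y → C`. -/
noncomputable def W : WeierstrassCurve.Affine (RatFunc ℚ) where
  a₁ := 0
  a₂ := s ^ 2 * (s + 1) ^ 2 - 12 * (s - 1) ^ 2
  a₃ := 0
  a₄ := 48 * (s - 1) ^ 4
  a₆ := -64 * (s - 1) ^ 6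

/-! The line `y = s(s+1)x` meets `W` where `(x − 4(s−1)²)³ = 0`, so it is the tangent to `W` at
`P = (4(s−1)², s(s+1)·4(s−1)²)` and meets `W` only there: `P` is a flex. Hence doubling `P` keeps
its `x`-coordinate, so `2P = −P` (as `2P = P` would force `P = 0`), and `3P = 0`. -/

namespace WeierstrassCurve.Affine.Point

variable {F : Type*} [Field F] [DecidableEq F] {W : Affine F}

lemma three_nsmul_some_eq_zero_of_addX_eq {x y : F} (h : W.Nonsingular x y)
    (hy : y ≠ W.negY x y) (hx : W.addX x x (W.slope x x y y) = x) :
    3 • some _ _ h = 0 := by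
  have hdouble : some _ _ h + some _ _ h = some _ _ h ∨ some _ _ h + some _ _ h = -some _ _ h := by
    rw [add_self_of_Y_ne hy]
    exact X_eq_iff.mp hx
  rcases hdouble with hdouble | hdouble
  · exact absurd (add_eq_right.mp hdouble) (some_ne_zero h)
  · rw [show (3 : ℕ) = 2 + 1 from rfl, succ_nsmul, two_nsmul, hdouble, neg_add_cancel]

end WeierstrassCurve.Affine.Point

lemma RatFunc.X_sub_C_ne_zero {K : Type*} [Field K] (a : K) : (X : RatFunc K) - C a ≠ 0 := by
  rw [← algebraMap_X, ← algebraMap_C, ← map_sub]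
  exact algebraMap_ne_zero (Polynomial.X_sub_C_ne_zero a)

lemma s_sub_one_ne_zero : s - 1 ≠ 0 := by
  simpa [s] using RatFunc.X_sub_C_ne_zero (1 : ℚ)

lemma s_add_one_ne_zero : s + 1 ≠ 0 := by
  simpa [s] using RatFunc.X_sub_C_ne_zero (-1 : ℚ)

lemma W_negY (x y : RatFunc ℚ) : W.negY x y = -y := by
  simp [Affine.negY, W]

lemma flex_y_ne_negY :
    4 * s * (s + 1) * (s - 1) ^ 2 ≠ W.negY (4 * (s - 1) ^ 2) (4 * s * (s + 1) * (s - 1) ^ 2) := by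
  have hy : 4 * s * (s + 1) * (s - 1) ^ 2 ≠ 0 :=
    mul_ne_zero (mul_ne_zero (mul_ne_zero (by norm_num) RatFunc.X_ne_zero) s_add_one_ne_zero)
      (pow_ne_zero 2 s_sub_one_ne_zero)
  rw [W_negY, ne_eq, eq_neg_iff_add_eq_zero, ← two_mul]
  exact mul_ne_zero two_ne_zero hy

open Classical in
lemma W_slope_flex :
    W.slope (4 * (s - 1) ^ 2) (4 * (s - 1) ^ 2) (4 * s * (s + 1) * (s - 1) ^ 2)
      (4 * s * (s + 1) * (s - 1) ^ 2) = s * (s + 1) := by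
  rw [Affine.slope_of_Y_ne rfl flex_y_ne_negY, div_eq_iff (sub_ne_zero.mpr flex_y_ne_negY),
    W_negY]
  simp only [W]
  ring

lemma W_addX_flex : W.addX (4 * (s - 1) ^ 2) (4 * (s - 1) ^ 2) (s * (s + 1)) = 4 * (s - 1) ^ 2 := by
  simp only [Affine.addX, W]
  ring

open Classical in
/-- The point `P = (4(s−1)², 4s(s+1)(s−1)²)` has additive order `3` in the group of
`ℚ(s)`-points of `W`. -/
theorem stmt_8 (hP : W.Nonsingular (4 * (s - 1) ^ 2) (4 * s * (s + 1) * (s - 1) ^ 2)) :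
    WeierstrassCurve.Affine.Point.some _ _ hP ≠ 0 ∧
      3 • WeierstrassCurve.Affine.Point.some _ _ hP = 0 :=
  ⟨Affine.Point.some_ne_zero hP, Affine.Point.three_nsmul_some_eq_zero_of_addX_eq hP
    flex_y_ne_negY (by rw [W_slope_flex, W_addX_flex])⟩
end
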